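/- For every r > 2M and all constants Ĥ, c₁ ∈ ℝ, the spacetime Hawking mass of the sphere of symmetry on the exterior CMC slice satisfies m_H^st(r) = M identically, and the Liu–Yau mass satisfies m_LY(r) = r·(1 − √(f(r))), independently of Ĥ and c₁. -/

import Mathlib

open Real Filter Topology Set

/-- Schwarzschild lapse-type function `f(r) = 1 - 2M/r`. -/
noncomputable def f (M r : ℝ) : ℝ := 1 - 2 * M / r

/-- `P(r) = Ĥ·r + c₁/r²`. -/
noncomputable def P (H c1 r : ℝ) : ℝ := H * r + c1 / r ^ 2

/-- Slope of the height function of the exterior CMC slice: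
`h'(r) = P(r)/(f(r)·√(f(r) + P(r)²))`. -/
noncomputable def h' (M H c1 r : ℝ) : ℝ :=
  P H c1 r / (f M r * Real.sqrt (f M r + (P H c1 r) ^ 2))

/-- Hawking mass `m_H(r) = (r/2)(1 − (f⁻¹ − f h'²)⁻¹)`. -/
noncomputable def mH (M H c1 r : ℝ) : ℝ :=
  r / 2 * (1 - ((f M r)⁻¹ - f M r * (h' M H c1 r) ^ 2)⁻¹)

/-- Brown–York mass `m_BY(r) = r(1 − (f⁻¹ − f h'²)^(−1/2))`. -/
noncomputable def mBY (M H c1 r : ℝ) : ℝ :=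
  r * (1 - ((f M r)⁻¹ - f M r * (h' M H c1 r) ^ 2) ^ (-(1 : ℝ) / 2))

/-- Liu–Yau mass `m_LY(r) = r(1 − (1 − f² h'²)^(1/2)·(f⁻¹ − f h'²)^(−1/2))`. -/
noncomputable def mLY (M H c1 r : ℝ) : ℝ :=
  r * (1 - (1 - (f M r) ^ 2 * (h' M H c1 r) ^ 2) ^ ((1 : ℝ) / 2) *
    ((f M r)⁻¹ - f M r * (h' M H c1 r) ^ 2) ^ (-(1 : ℝ) / 2))

/-- Spacetime Hawking mass `m_H^st(r) = (r/2)(1 − (1 − f² h'²)(f⁻¹ − f h'²)⁻¹)`. -/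
noncomputable def mHst (M H c1 r : ℝ) : ℝ :=
  r / 2 * (1 - (1 - (f M r) ^ 2 * (h' M H c1 r) ^ 2) *
    ((f M r)⁻¹ - f M r * (h' M H c1 r) ^ 2)⁻¹)

/-!
Along the slice `f⁻¹ - f h'² = (f + P²)⁻¹` and `1 - f² h'² = f / (f + P²)`, so the factor
`(1 - f² h'²) (f⁻¹ - f h'²)⁻¹` in `m_H^st` is exactly `f`, and the corresponding factor in
`m_LY` is `√f`, whatever `P` is. Then `m_H^st = r (1 - f) / 2 = M`.
-/

section SlopeAlgebra

variable {a p : ℝ}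

theorem inv_sub_mul_sq_slope (ha : 0 < a) :
    a⁻¹ - a * (p / (a * √(a + p ^ 2))) ^ 2 = (a + p ^ 2)⁻¹ := by
  have hs : 0 < a + p ^ 2 := by positivity
  rw [div_pow, mul_pow, sq_sqrt hs.le]
  field_simp
  ring

theorem one_sub_sq_mul_sq_slope (ha : 0 < a) :
    1 - a ^ 2 * (p / (a * √(a + p ^ 2))) ^ 2 = a / (a + p ^ 2) := by
  have hs : 0 < a + p ^ 2 := by positivity
  rw [div_pow, mul_pow, sq_sqrt hs.le]
  field_simp
  ring

end SlopeAlgebra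

theorem rpow_half_div_mul_inv_rpow_neg_half {a b : ℝ} (ha : 0 ≤ a) (hb : 0 < b) :
    (a / b) ^ ((1 : ℝ) / 2) * b⁻¹ ^ (-(1 : ℝ) / 2) = √a := by
  rw [div_rpow ha hb.le, inv_rpow hb.le, neg_div, rpow_neg hb.le, inv_inv,
    div_mul_cancel₀ _ (rpow_pos_of_pos hb _).ne', sqrt_eq_rpow]

section Schwarzschild

variable {M H c1 r : ℝ}

theorem f_pos (hr0 : 0 < r) (hr : 2 * M < r) : 0 < f M r := by
  have : 2 * M / r < 1 := (div_lt_one hr0).mpr hr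
  unfold f
  linarith

theorem half_mul_one_sub_f (hr : r ≠ 0) : r / 2 * (1 - f M r) = M := by
  unfold f
  field_simp
  ring

theorem inv_f_sub_f_mul_sq_h' (hf : 0 < f M r) :
    (f M r)⁻¹ - f M r * h' M H c1 r ^ 2 = (f M r + P H c1 r ^ 2)⁻¹ :=
  inv_sub_mul_sq_slope hf

theorem one_sub_sq_f_mul_sq_h' (hf : 0 < f M r) :
    1 - f M r ^ 2 * h' M H c1 r ^ 2 = f M r / (f M r + P H c1 r ^ 2) :=
  one_sub_sq_mul_sq_slope hf

end Schwarzschild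

/-- For every `r > 2M` and all constants `Ĥ, c₁ ∈ ℝ`, the spacetime Hawking mass of
the sphere of symmetry on the exterior CMC slice satisfies `m_H^st(r) = M`
identically, and the Liu–Yau mass satisfies `m_LY(r) = r(1 − √(f(r)))`,
independently of `Ĥ` and `c₁`. -/
theorem spacetime_hawking_const (M : ℝ) (hM : 0 < M) :
    ∀ (H c1 r : ℝ), 2 * M < r →
      mHst M H c1 r = M ∧ mLY M H c1 r = r * (1 - Real.sqrt (f M r)) := by
  intro H c1 r hr
  have hr0 : 0 < r := by linarith
  have hf : 0 < f M r := f_pos hr0 hr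
  have hs : 0 < f M r + P H c1 r ^ 2 := by positivity
  rw [mHst, mLY, inv_f_sub_f_mul_sq_h' hf, one_sub_sq_f_mul_sq_h' hf, inv_inv,
    div_mul_cancel₀ _ hs.ne', rpow_half_div_mul_inv_rpow_neg_half hf.le hs]
  exact ⟨half_mul_one_sub_f hr0.ne', rfl⟩
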